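/- Let p be an odd prime and let m ≥ 2 be an even natural number. Set ε = ((−1)^{(p−1)/2})^{m/2} ∈ {+1, −1}. Then the cardinality of O_m(1_m) = {γ ∈ GL_m(𝔽_p) : γᵀ γ = 1_m}, viewed as an integer, equals 2 · p^{(m²−2m)/4} · (p^{m/2} − ε) · ∏_{r=1}^{m/2−1} (p^{2r} − 1). -/

import Mathlib

/-!
Taking the last row maps `O_(n+1)` onto the vectors `v` with `v ⬝ᵥ v = 1`; products of
reflections make all fibres equinumerous, and the fibre over a standard basis vector is `O_n`.
Hence `|O_(n+1)| = N_(n+1)(1) |O_n|`, where `N_n(b)` counts the `v ∈ F^n` with `v ⬝ᵥ v = b`.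
Splitting off two coordinates and evaluating the Jacobi sum of the quadratic character `χ` gives
`N_(n+2)(b) = q^n (q - χ(-1)) + χ(-1) q N_n(b)`, hence
`N_(2t+1)(1) = q^(2t) + χ(-1)^t q^t` and `N_(2t+2)(1) = q^(2t+1) - χ(-1)^(t+1) q^t`.
Multiplying these out gives the formula; over `𝔽_p`, `χ(-1) = (-1)^((p-1)/2)`.
-/

open Matrix Finset

section CharacterSums
variable {F : Type*} [Field F] [Fintype F] [DecidableEq F]

local notation "χ" => quadraticChar F
local notation "q" => (Fintype.card F : ℤ)

lemma sum_quadraticChar_mul_self :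
    ∑ a : F, χ a * χ a = q - 1 := by
  have hsq : χ * χ = 1 := by rw [← sq, (quadraticChar_isQuadratic F).sq_eq_one]
  have h := MulChar.sum_one_eq_card_units (R := F) (R' := ℤ)
  rw [← hsq, Fintype.card_units] at h
  simpa [Nat.cast_sub Fintype.card_pos] using h

lemma sum_quadraticChar_mul_quadraticChar_sub (hF : ringChar F ≠ 2) (b : F) :
    ∑ a : F, χ a * χ (b - a) = χ (-1) * ((if b = 0 then q else 0) - 1) := by
  by_cases hb : b = 0
  · have h (a : F) : χ a * χ (0 - a) = χ (-1) * (χ a * χ a) := by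
      rw [zero_sub, neg_eq_neg_one_mul a, map_mul]; ring
    simp only [hb, if_true, h, ← mul_sum, sum_quadraticChar_mul_self]
  · have h (x : F) : χ (b * x) * χ (b - b * x) = χ b ^ 2 * (χ x * χ⁻¹ (1 - x)) := by
      rw [(quadraticChar_isQuadratic F).inv, ← mul_one_sub, map_mul, map_mul]; ring
    have hJ := jacobiSum_nontrivial_inv (quadraticChar_ne_one hF)
    rw [jacobiSum] at hJ
    rw [← Fintype.sum_bijective _ (mulLeft_bijective₀ b hb) _ _ fun _ => rfl]
    simp only [h, ← mul_sum, hJ, quadraticChar_sq_one hb, hb, if_false]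
    ring
end CharacterSums

lemma Nat.card_add_eq_sum_mul {α β M : Type*} [Finite α] [Finite β] [AddCommGroup M] [Fintype M]
    (f : α → M) (g : β → M) (b : M) :
    Nat.card {x : α × β // f x.1 + g x.2 = b} =
      ∑ a, Nat.card {x // f x = a} * Nat.card {y // g y = b - a} := by
  simp_rw [← Nat.card_prod]
  rw [← Nat.card_sigma]
  exact Nat.card_congr
    { toFun := fun x => ⟨f x.1.1, ⟨x.1.1, rfl⟩, ⟨x.1.2, eq_sub_of_add_eq' x.2⟩⟩
      invFun := fun y => ⟨(y.2.1.1, y.2.2.1), by rw [y.2.1.2, y.2.2.2, add_sub_cancel]⟩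
      left_inv := fun _ => rfl
      right_inv := by rintro ⟨a, ⟨x, rfl⟩, ⟨y, hy⟩⟩; rfl }

section Spheres
variable {F : Type*} [CommRing F]

variable (F) in
noncomputable def sphereCard (ι : Type*) [Fintype ι] (b : F) : ℕ :=
  Nat.card {v : ι → F // v ⬝ᵥ v = b}

lemma sphereCard_congr {ι κ : Type*} [Fintype ι] [Fintype κ] (e : ι ≃ κ) (b : F) :
    sphereCard F ι b = sphereCard F κ b :=
  Nat.card_congr <| (e.arrowCongr (Equiv.refl F)).subtypeEquiv fun v => by
    change _ ↔ v ∘ e.symm ⬝ᵥ v ∘ e.symm = b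
    rw [comp_equiv_dotProduct_comp_equiv]

variable [Fintype F]

lemma sphereCard_sum (ι κ : Type*) [Fintype ι] [Fintype κ] (b : F) :
    sphereCard F (ι ⊕ κ) b = ∑ a, sphereCard F ι a * sphereCard F κ (b - a) := by
  unfold sphereCard
  rw [← Nat.card_add_eq_sum_mul]
  exact Nat.card_congr <| (Equiv.sumArrowEquivProdArrow ι κ F).subtypeEquiv fun v => by
    simp [dotProduct, Fintype.sum_sum_type]

lemma sum_sphereCard (ι : Type*) [Fintype ι] [DecidableEq ι] :
    ∑ b : F, (sphereCard F ι b : ℤ) = (Fintype.card F : ℤ) ^ Fintype.card ι := by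
  unfold sphereCard
  rw [← Nat.cast_sum, ← Nat.card_sigma, Nat.card_congr (Equiv.sigmaFiberEquiv _)]
  simp [Nat.card_eq_fintype_card]

end Spheres

section SphereCounts
variable {F : Type*} [Field F] [Fintype F] [DecidableEq F]

local notation "χ" => quadraticChar F
local notation "q" => (Fintype.card F : ℤ)

lemma sphereCard_of_unique (hF : ringChar F ≠ 2) (ι : Type*) [Fintype ι] [Unique ι] (b : F) :
    (sphereCard F ι b : ℤ) = χ b + 1 := by
  rw [← quadraticChar_card_sqrts hF, ← Nat.card_eq_card_toFinset]
  exact congrArg _ <| Nat.card_congr <| (Equiv.funUnique ι F).subtypeEquiv fun v => by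
    simp [dotProduct, sq]

lemma sphereCard_fin_two (hF : ringChar F ≠ 2) (b : F) :
    (sphereCard F (Fin 2) b : ℤ) = q - χ (-1) + if b = 0 then χ (-1) * q else 0 := by
  have hshift : ∑ a : F, χ (b - a) = 0 := by
    rw [Fintype.sum_equiv (Equiv.subLeft b) (fun a => χ (b - a)) χ fun _ => rfl,
      quadraticChar_sum_zero hF]
  rw [← sphereCard_congr (finSumFinEquiv : Fin 1 ⊕ Fin 1 ≃ Fin 2), sphereCard_sum, Nat.cast_sum]
  simp only [Nat.cast_mul, sphereCard_of_unique hF, add_mul, mul_add, one_mul, mul_one,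
    sum_add_distrib, sum_quadraticChar_mul_quadraticChar_sub hF, hshift, quadraticChar_sum_zero hF]
  split_ifs <;> simp <;> ring

lemma sphereCard_fin_add_two (hF : ringChar F ≠ 2) (n : ℕ) (b : F) :
    (sphereCard F (Fin (n + 2)) b : ℤ) =
      q ^ n * (q - χ (-1)) + χ (-1) * q * sphereCard F (Fin n) b := by
  rw [← sphereCard_congr finSumFinEquiv, sphereCard_sum, Nat.cast_sum]
  simp only [Nat.cast_mul, sphereCard_fin_two hF, sub_eq_zero, mul_add, mul_ite, mul_zero,
    sum_add_distrib, ← sum_mul, sum_sphereCard, Fintype.card_fin, sum_ite_eq, mem_univ, if_true]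
  ring

lemma sphereCard_fin_odd (hF : ringChar F ≠ 2) (b : F) (t : ℕ) :
    (sphereCard F (Fin (2 * t + 1)) b : ℤ) = q ^ (2 * t) + χ (-1) ^ t * q ^ t * χ b := by
  induction t with
  | zero => simp [sphereCard_of_unique hF]; ring
  | succ t ih =>
    rw [show 2 * (t + 1) + 1 = 2 * t + 1 + 2 by ring, sphereCard_fin_add_two hF, ih]
    ring

lemma sphereCard_fin_even (hF : ringChar F ≠ 2) {b : F} (hb : b ≠ 0) (t : ℕ) :
    (sphereCard F (Fin (2 * t + 2)) b : ℤ) = q ^ (2 * t + 1) - χ (-1) ^ (t + 1) * q ^ t := by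
  induction t with
  | zero => simp [sphereCard_fin_two hF, hb]
  | succ t ih =>
    rw [show 2 * (t + 1) + 2 = 2 * t + 2 + 2 by ring, sphereCard_fin_add_two hF, ih]
    ring

end SphereCounts

section OrthogonalGroup
attribute [local instance] starRingOfComm
variable {F : Type*} [CommRing F] {ι : Type*} [Fintype ι] [DecidableEq ι]

lemma mem_orthogonalGroup_apply_eq_single {A : Matrix ι ι F} (hA : A ∈ orthogonalGroup ι F)
    {i₀ : ι} (hrow : A i₀ = Pi.single i₀ 1) (i : ι) : A i i₀ = (Pi.single i₀ 1 : ι → F) i := by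
  have h := congrFun₂ ((mem_orthogonalGroup_iff ι F).1 hA) i i₀
  change A i ⬝ᵥ A i₀ = _ at h
  rwa [hrow, dotProduct_single, mul_one, one_apply, ← Pi.single_apply] at h

variable {κ : Type*} [Fintype κ] [DecidableEq κ]

lemma fromBlocks_mem_orthogonalGroup_iff {A : Matrix ι ι F} :
    fromBlocks A 0 0 (1 : Matrix κ κ F) ∈ orthogonalGroup (ι ⊕ κ) F ↔ A ∈ orthogonalGroup ι F := by
  simp only [mem_orthogonalGroup_iff', fromBlocks_transpose, fromBlocks_multiply]
  simp [← fromBlocks_one, fromBlocks_inj]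

lemma eq_fromBlocks_of_mem_orthogonalGroup [Unique κ] {A : Matrix (ι ⊕ κ) (ι ⊕ κ) F}
    (hA : A ∈ orthogonalGroup (ι ⊕ κ) F) (hrow : A (.inr default) = Pi.single (.inr default) 1) :
    A = fromBlocks A.toBlocks₁₁ 0 0 1 := by
  have hcol := mem_orthogonalGroup_apply_eq_single hA hrow
  conv_lhs => rw [← fromBlocks_toBlocks A]
  congr 1 <;> ext i j
  · simpa [toBlocks₁₂, Unique.eq_default j] using hcol (.inl i)
  · simpa [toBlocks₂₁, Unique.eq_default i] using congrFun hrow (.inl j)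
  · rw [Unique.eq_default i, Unique.eq_default j]
    simpa [toBlocks₂₂] using congrFun hrow (.inr default)

def rowStabilizerEquiv [Unique κ] :
    {A : orthogonalGroup (ι ⊕ κ) F //
      (A : Matrix (ι ⊕ κ) (ι ⊕ κ) F) (Sum.inr default) = Pi.single (Sum.inr default) 1}
      ≃ orthogonalGroup ι F where
  toFun A := ⟨A.1.1.toBlocks₁₁, fromBlocks_mem_orthogonalGroup_iff.1
    (eq_fromBlocks_of_mem_orthogonalGroup A.1.2 A.2 ▸ A.1.2)⟩
  invFun A := ⟨⟨fromBlocks A 0 0 1, fromBlocks_mem_orthogonalGroup_iff.2 A.2⟩, by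
    ext (j | j)
    · simp
    · simp [Unique.eq_default j]⟩
  left_inv A := Subtype.ext <| Subtype.ext (eq_fromBlocks_of_mem_orthogonalGroup A.1.2 A.2).symm
  right_inv A := Subtype.ext <| toBlocks_fromBlocks₁₁ _ _ _ _

lemma reindex_mem_orthogonalGroup_iff (e : ι ≃ κ) {A : Matrix ι ι F} :
    reindex e e A ∈ orthogonalGroup κ F ↔ A ∈ orthogonalGroup ι F := by
  have h : reindex e e A * (reindex e e A)ᵀ = reindexAlgEquiv F F e (A * Aᵀ) := by simp
  rw [mem_orthogonalGroup_iff, mem_orthogonalGroup_iff, h,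
    map_eq_one_iff _ (reindexAlgEquiv F F e).injective]

lemma card_orthogonalGroup_congr (e : ι ≃ κ) :
    Nat.card (orthogonalGroup ι F) = Nat.card (orthogonalGroup κ F) :=
  Nat.card_congr <| (reindex e e).subtypeEquiv fun _ => (reindex_mem_orthogonalGroup_iff e).symm


lemma card_GL_transpose_mul_self_eq_one :
    Nat.card {γ : GL ι F // (γ : Matrix ι ι F)ᵀ * (γ : Matrix ι ι F) = 1} =
      Nat.card (orthogonalGroup ι F) :=
  Nat.card_congr
    { toFun γ := ⟨γ.1, (mem_orthogonalGroup_iff' ι F).2 γ.2⟩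
      invFun A := ⟨Unitary.toUnits A, (mem_orthogonalGroup_iff' ι F).1 A.2⟩
      left_inv _ := Subtype.ext <| Units.ext rfl
      right_inv _ := rfl }

end OrthogonalGroup

section Reflections
attribute [local instance] starRingOfComm
variable {F : Type*} [Field F] {ι : Type*} [Fintype ι] [DecidableEq ι]

def reflection (a : ι → F) : Matrix ι ι F := 1 - (2 / (a ⬝ᵥ a)) • vecMulVec a a

lemma reflection_transpose (a : ι → F) : (reflection a)ᵀ = reflection a := by
  simp [reflection]

lemma vecMul_reflection (u a : ι → F) :
    u ᵥ* reflection a = u - (2 * (u ⬝ᵥ a) / (a ⬝ᵥ a)) • a := by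
  rw [reflection, vecMul_sub, vecMul_one, vecMul_smul, vecMul_vecMulVec, smul_smul]
  ring_nf

lemma reflection_mul_self {a : ι → F} (ha : a ⬝ᵥ a ≠ 0) : reflection a * reflection a = 1 := by
  have hc : 2 / (a ⬝ᵥ a) * (2 / (a ⬝ᵥ a) * (a ⬝ᵥ a)) = 2 / (a ⬝ᵥ a) + 2 / (a ⬝ᵥ a) := by
    field_simp; ring
  simp only [reflection, sub_mul, mul_sub, one_mul, mul_one, Matrix.smul_mul, Matrix.mul_smul,
    vecMulVec_mul_vecMulVec, vecMulVec_smul, smul_smul, hc, add_smul]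
  abel

lemma reflection_mem_orthogonalGroup {a : ι → F} (ha : a ⬝ᵥ a ≠ 0) :
    reflection a ∈ orthogonalGroup ι F := by
  rw [mem_orthogonalGroup_iff, reflection_transpose, reflection_mul_self ha]

lemma vecMul_reflection_sub {u v : ι → F} (h : u ⬝ᵥ u = v ⬝ᵥ v)
    (huv : (u - v) ⬝ᵥ (u - v) ≠ 0) : u ᵥ* reflection (u - v) = v := by
  have h2 : 2 * (u ⬝ᵥ (u - v)) = (u - v) ⬝ᵥ (u - v) := by
    simp only [dotProduct_sub, sub_dotProduct, dotProduct_comm v u, h]; ring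
  rw [vecMul_reflection, h2, div_self huv, one_smul, sub_sub_cancel]

lemma exists_mem_orthogonalGroup_vecMul_eq (h2 : (2 : F) ≠ 0) {u v : ι → F}
    (h : u ⬝ᵥ u = v ⬝ᵥ v) (hu : u ⬝ᵥ u ≠ 0) : ∃ B ∈ orthogonalGroup ι F, u ᵥ* B = v := by
  by_cases huv : (u - v) ⬝ᵥ (u - v) = 0
  swap
  · exact ⟨_, reflection_mem_orthogonalGroup huv, vecMul_reflection_sub h huv⟩
  -- `u - v` is isotropic, so `u + v` is not: reflect `u` to `-v`, then `-v` to `v`.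
  have h4 : (4 : F) ≠ 0 := by rw [show (4 : F) = 2 * 2 by norm_num]; exact mul_ne_zero h2 h2
  have hneg : (-v) ⬝ᵥ (-v) = v ⬝ᵥ v := by simp
  have h₁ : (u - -v) ⬝ᵥ (u - -v) ≠ 0 := by
    have : (u - -v) ⬝ᵥ (u - -v) = 4 * (u ⬝ᵥ u) - (u - v) ⬝ᵥ (u - v) := by
      simp only [dotProduct_sub, sub_dotProduct, dotProduct_neg, neg_dotProduct,
        dotProduct_comm v u, h]; ring
    rw [this, huv, sub_zero]; exact mul_ne_zero h4 hu
  have h₂ : (-v - v) ⬝ᵥ (-v - v) ≠ 0 := by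
    have : (-v - v) ⬝ᵥ (-v - v) = 4 * (u ⬝ᵥ u) := by
      simp only [dotProduct_sub, sub_dotProduct, dotProduct_neg, neg_dotProduct, h]; ring
    rw [this]; exact mul_ne_zero h4 hu
  refine ⟨_, mul_mem (reflection_mem_orthogonalGroup h₁) (reflection_mem_orthogonalGroup h₂), ?_⟩
  rw [← vecMul_vecMul, vecMul_reflection_sub (h.trans hneg.symm) h₁,
    vecMul_reflection_sub hneg h₂]

end Reflections

section OrthogonalGroupCard
attribute [local instance] starRingOfComm
variable {F : Type*} [Field F] [Fintype F] [DecidableEq F] {ι κ : Type*} [Fintype ι] [DecidableEq ι]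
  [Fintype κ] [DecidableEq κ]

local notation "χ" => quadraticChar F
local notation "q" => (Fintype.card F : ℤ)

lemma card_orthogonalGroup_eq_sphereCard_mul (h2 : (2 : F) ≠ 0) (i₀ : ι) :
    Nat.card (orthogonalGroup ι F) = sphereCard F ι 1 *
      Nat.card {A : orthogonalGroup ι F // (A : Matrix ι ι F) i₀ = Pi.single i₀ 1} := by
  classical
  let row (A : orthogonalGroup ι F) : {v : ι → F // v ⬝ᵥ v = 1} :=
    ⟨(A : Matrix ι ι F) i₀, by
      have h := congrFun₂ ((mem_orthogonalGroup_iff ι F).1 A.2) i₀ i₀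
      rwa [one_apply_eq] at h⟩
  have hfiber (v : {v : ι → F // v ⬝ᵥ v = 1}) : Nat.card {A // row A = v} =
      Nat.card {A : orthogonalGroup ι F // (A : Matrix ι ι F) i₀ = Pi.single i₀ 1} := by
    obtain ⟨B, hB, hBv⟩ := exists_mem_orthogonalGroup_vecMul_eq h2 (u := Pi.single i₀ 1)
      (v := v.1) (by rw [v.2]; simp) (by simp)
    refine Nat.card_congr ((Equiv.mulRight ⟨B, hB⟩).subtypeEquiv fun A => ?_).symm
    have hinj := vecMul_injective_of_isUnit <|
      IsUnit.of_mul_eq_one Bᵀ ((mem_orthogonalGroup_iff ι F).1 hB)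
    simp only [row, Subtype.ext_iff, Equiv.coe_mulRight, Submonoid.coe_mul, mul_apply_eq_vecMul,
      ← hBv, hinj.eq_iff]
  rw [← Nat.card_congr (Equiv.sigmaFiberEquiv row), Nat.card_sigma]
  simp only [hfiber, sum_const, card_univ, smul_eq_mul, sphereCard, Nat.card_eq_fintype_card]

lemma card_orthogonalGroup_sum_unique [Unique κ] (h2 : (2 : F) ≠ 0) :
    Nat.card (orthogonalGroup (ι ⊕ κ) F) =
      sphereCard F (ι ⊕ κ) 1 * Nat.card (orthogonalGroup ι F) := by
  rw [card_orthogonalGroup_eq_sphereCard_mul h2 (Sum.inr default),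
    Nat.card_congr rowStabilizerEquiv]

lemma card_orthogonalGroup_fin_succ (h2 : (2 : F) ≠ 0) (n : ℕ) :
    Nat.card (orthogonalGroup (Fin (n + 1)) F) =
      sphereCard F (Fin (n + 1)) 1 * Nat.card (orthogonalGroup (Fin n) F) := by
  rw [card_orthogonalGroup_congr finSumFinEquiv.symm, card_orthogonalGroup_sum_unique h2,
    sphereCard_congr finSumFinEquiv]

lemma card_orthogonalGroup_fin_even (hF : ringChar F ≠ 2) (M : ℕ) :
    (Nat.card (orthogonalGroup (Fin (2 * M + 2)) F) : ℤ) =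
      2 * q ^ (M * (M + 1)) * (q ^ (M + 1) - χ (-1) ^ (M + 1)) *
        ∏ r ∈ Icc 1 M, (q ^ (2 * r) - 1) := by
  have h2 : (2 : F) ≠ 0 := Ring.two_ne_zero hF
  have hstep (n : ℕ) : (Nat.card (orthogonalGroup (Fin (n + 2)) F) : ℤ) =
      sphereCard F (Fin (n + 2)) 1 * sphereCard F (Fin (n + 1)) 1 *
        Nat.card (orthogonalGroup (Fin n) F) := by
    rw [card_orthogonalGroup_fin_succ h2, card_orthogonalGroup_fin_succ h2]; push_cast; ring
  induction M with
  | zero =>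
    rw [hstep, sphereCard_fin_even hF one_ne_zero, sphereCard_fin_odd hF]
    simp [mul_comm]
  | succ M ih =>
    have hε : χ (-1) ^ (M + 1) * χ (-1) ^ (M + 1) = 1 := by
      rw [← mul_pow, ← sq, quadraticChar_sq_one (neg_ne_zero.2 one_ne_zero), one_pow]
    rw [hstep, sphereCard_fin_even hF one_ne_zero, sphereCard_fin_odd hF, map_one, mul_one,
      show 2 * (M + 1) = 2 * M + 2 by ring, ih, prod_Icc_succ_top (by omega)]
    linear_combination (-(2 * q ^ ((M + 1) * (M + 2)) * (q ^ (M + 2) - χ (-1) ^ (M + 2)) *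
      ∏ r ∈ Icc 1 M, (q ^ (2 * r) - 1))) * hε

end OrthogonalGroupCard

lemma ZMod.quadraticChar_neg_one_eq_neg_one_pow {p : ℕ} [Fact p.Prime] (hp : p ≠ 2) :
    quadraticChar (ZMod p) (-1) = (-1) ^ ((p - 1) / 2) := by
  have hodd : p % 2 = 1 := Nat.odd_iff.mp ((Fact.out : p.Prime).odd_of_ne_two hp)
  rw [quadraticChar_neg_one (by rwa [ZMod.ringChar_zmod_n]), ZMod.card,
    ZMod.χ₄_eq_neg_one_pow hodd]
  congr 1
  omega

theorem stmt_3 (p : ℕ) (hp : p.Prime) (hp2 : p ≠ 2) (m : ℕ) (hm : 2 ≤ m) (heven : Even m) :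
    (Nat.card {γ : GL (Fin m) (ZMod p) //
        (γ : Matrix (Fin m) (Fin m) (ZMod p))ᵀ * (γ : Matrix (Fin m) (Fin m) (ZMod p)) = 1} : ℤ) =
      2 * (p : ℤ) ^ ((m ^ 2 - 2 * m) / 4) *
        ((p : ℤ) ^ (m / 2) - ((-1 : ℤ) ^ ((p - 1) / 2)) ^ (m / 2)) *
        ∏ r ∈ Finset.Icc 1 (m / 2 - 1), ((p : ℤ) ^ (2 * r) - 1) := by
  have : Fact p.Prime := ⟨hp⟩
  obtain ⟨M, rfl⟩ : ∃ M, m = 2 * M + 2 := ⟨m / 2 - 1, by obtain ⟨k, rfl⟩ := heven; omega⟩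
  have hexp : ((2 * M + 2) ^ 2 - 2 * (2 * M + 2)) / 4 = M * (M + 1) := by
    rw [show (2 * M + 2) ^ 2 - 2 * (2 * M + 2) = 4 * (M * (M + 1)) by
      rw [Nat.sub_eq_iff_eq_add (by nlinarith)]; ring]
    omega
  rw [card_GL_transpose_mul_self_eq_one,
    card_orthogonalGroup_fin_even (by rwa [ZMod.ringChar_zmod_n]), ZMod.card, ZMod.quadraticChar_neg_one_eq_neg_one_pow hp2, hexp,
    show (2 * M + 2) / 2 = M + 1 by omega, Nat.add_sub_cancel]
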